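/- Assume a_n > 0 for all n and ∑_{n≥1} a_n < ∞, and let T = ∑_{n≥1} a_n κ_n θ_n. Then for every t ≥ 0, ℙ( T ≥ t ) ≥ ∑_{n≥1} (1−α) α^{n−1} e^{−t/a_n} ≥ exp( − (1−α) ∑_{n≥1} α^{n−1} t / a_n ), where the last bound is interpreted as trivially true if ∑_{n≥1} α^{n−1} / a_n = ∞. -/

import Mathlib

open MeasureTheory ProbabilityTheory Filter Topology

/-!
Let `E n` be the event that `n` is the first index with `κ n = 1` and that `θ n > t / a n`.
These events are disjoint, and by independence `P (E n) = (1 - α) α ^ n exp (-t / a n)`. On `E n`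
the series `∑ a k κ k θ k` is at least `a n θ n > t`: its terms are nonnegative and, since their
means are at most `a k`, it converges almost surely. The second inequality is Jensen's inequality
for `exp` with the geometric weights `(1 - α) α ^ n`, proved through the tangent line at the mean.
-/

theorem Real.exp_tsum_mul_le_tsum_mul_exp {ι : Type*} {w x : ι → ℝ} (hw : ∀ i, 0 ≤ w i)
    (hw1 : HasSum w 1) (hwx : Summable fun i => w i * x i)
    (hwe : Summable fun i => w i * Real.exp (x i)) :
    Real.exp (∑' i, w i * x i) ≤ ∑' i, w i * Real.exp (x i) := by
  set c := ∑' i, w i * x i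
  -- `exp` lies above its tangent line at the barycentre `c`
  have htangent : ∀ i, Real.exp c * (w i + w i * x i - c * w i) ≤ w i * Real.exp (x i) := by
    intro i
    have h := Real.add_one_le_exp (x i - c)
    rw [Real.exp_sub, le_div_iff₀ (Real.exp_pos c)] at h
    nlinarith [hw i]
  have hsum : HasSum (fun i => Real.exp c * (w i + w i * x i - c * w i))
      (Real.exp c * (1 + c - c * 1)) :=
    ((hw1.add hwx.hasSum).sub (hw1.mul_left c)).mul_left (Real.exp c)
  rw [mul_one, add_sub_cancel_right, mul_one] at hsum
  exact hasSum_le htangent hsum hwe.hasSum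

section ExponentialTail

variable {Ω : Type*} [MeasurableSpace Ω] {P : Measure Ω} [IsProbabilityMeasure P] {X : Ω → ℝ}

theorem ae_pos_of_measure_lt_eq_exp (hX : Measurable X)
    (htail : ∀ t, 0 ≤ t → P {ω | t < X ω} = ENNReal.ofReal (Real.exp (-t))) :
    ∀ᵐ ω ∂P, 0 < X ω := by
  rw [ae_iff_measure_eq (measurableSet_lt measurable_const hX).nullMeasurableSet, htail 0 le_rfl]
  simp

theorem lintegral_enorm_eq_one_of_measure_lt_eq_exp (hX : Measurable X)
    (htail : ∀ t, 0 ≤ t → P {ω | t < X ω} = ENNReal.ofReal (Real.exp (-t))) :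
    ∫⁻ ω, ‖X ω‖ₑ ∂P = 1 := by
  have hX0 := ae_pos_of_measure_lt_eq_exp hX htail
  rw [lintegral_congr_ae (hX0.mono fun _ h => Real.enorm_of_nonneg h.le),
    lintegral_eq_lintegral_meas_lt P (hX0.mono fun _ h => h.le) hX.aemeasurable,
    setLIntegral_congr_fun measurableSet_Ioi fun t (ht : 0 < t) => htail t ht.le,
    ← ofReal_integral_eq_lintegral_ofReal (integrableOn_exp_neg_Ioi 0)
      (ae_of_all _ fun t => (Real.exp_pos _).le),
    integral_exp_neg_Ioi_zero, ENNReal.ofReal_one]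

end ExponentialTail

def firstEntrance {Ω β : Type*} (X : ℕ → Ω → β) (A B : Set β) (n : ℕ) : Set Ω :=
  {ω | (∀ k < n, X k ω ∈ A) ∧ X n ω ∈ B}

section FirstEntrance

variable {Ω β : Type*} {X : ℕ → Ω → β} {A B : Set β}

open Function in
theorem pairwise_disjoint_firstEntrance (hAB : Disjoint A B) :
    Pairwise (Disjoint on firstEntrance X A B) := by
  refine (pairwise_disjoint_on _).2 fun m n hmn => Set.disjoint_left.2 fun ω hm hn => ?_
  exact hAB.notMem_of_mem_right hm.2 (hn.1 m hmn)

variable [MeasurableSpace Ω] [MeasurableSpace β]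

theorem measurableSet_firstEntrance (hX : ∀ n, Measurable (X n)) (hA : MeasurableSet A)
    (hB : MeasurableSet B) (n : ℕ) : MeasurableSet (firstEntrance X A B n) := by
  have h : firstEntrance X A B n = (⋂ k ∈ Finset.range n, X k ⁻¹' A) ∩ X n ⁻¹' B := by
    ext ω
    simp [firstEntrance]
  rw [h]
  exact (Finset.measurableSet_biInter _ fun k _ => hX k hA).inter (hX n hB)

theorem ProbabilityTheory.iIndepFun.measure_firstEntrance_inter {P : Measure Ω}
    {Y : ℕ → Ω → β} (hXY : iIndepFun (Sum.elim X Y) P) (hA : MeasurableSet A)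
    (hB : MeasurableSet B) {C : Set β} (hC : MeasurableSet C) (n : ℕ) :
    P (firstEntrance X A B n ∩ Y n ⁻¹' C)
      = (∏ k ∈ Finset.range n, P (X k ⁻¹' A)) * P (X n ⁻¹' B) * P (Y n ⁻¹' C) := by
  let sets : ℕ ⊕ ℕ → Set β :=
    Sum.elim (fun k => if k < n then A else B) (fun _ => C)
  have hsets : ∀ i, MeasurableSet (sets i) := by
    rintro (k | k)
    · by_cases hk : k < n <;> simp [sets, hk, hA, hB]
    · exact hC
  have h := hXY.measure_inter_preimage_eq_mul ((Finset.range (n + 1)).disjSum {n})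
    (sets := sets) fun i _ => hsets i
  have hinter : ⋂ i ∈ (Finset.range (n + 1)).disjSum {n}, Sum.elim X Y i ⁻¹' sets i
      = firstEntrance X A B n ∩ Y n ⁻¹' C := by
    ext ω
    simp only [Set.mem_iInter, Set.mem_preimage, Sum.forall, Finset.inl_mem_disjSum,
      Finset.inr_mem_disjSum, Finset.mem_range, Finset.mem_singleton, forall_eq, Sum.elim_inl,
      Sum.elim_inr, Nat.forall_lt_succ_right, sets, lt_irrefl, if_false, firstEntrance,
      Set.mem_inter_iff, Set.mem_ofPred_eq]
    exact and_congr_left' (and_congr_left' (forall₂_congr fun k hk => by rw [if_pos hk]))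
  rw [hinter, Finset.prod_disjSum, Finset.prod_range_succ, Finset.prod_singleton] at h
  simp only [sets, Sum.elim_inl, Sum.elim_inr, lt_irrefl, if_false] at h
  rw [h, Finset.prod_congr rfl fun k hk => by rw [if_pos (Finset.mem_range.1 hk)]]

theorem measure_iUnion_firstEntrance_inter {P : Measure Ω} {Y : ℕ → Ω → β}
    (hX : ∀ n, Measurable (X n)) (hY : ∀ n, Measurable (Y n)) (hA : MeasurableSet A)
    (hB : MeasurableSet B) (hAB : Disjoint A B) {C : ℕ → Set β} (hC : ∀ n, MeasurableSet (C n)) :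
    P (⋃ n, firstEntrance X A B n ∩ Y n ⁻¹' C n) = ∑' n, P (firstEntrance X A B n ∩ Y n ⁻¹' C n) :=
  measure_iUnion ((pairwise_disjoint_firstEntrance hAB).mono fun _ _ h =>
      h.mono Set.inter_subset_left Set.inter_subset_left)
    fun n => (measurableSet_firstEntrance hX hA hB n).inter (hY n (hC n))

end FirstEntrance

section RandomSeries

variable {Ω : Type*} [MeasurableSpace Ω] {P : Measure Ω}

theorem ae_summable_mul_mul {a : ℕ → ℝ} {κ θ : ℕ → Ω → ℝ} (ha : Summable a)
    (hκm : ∀ n, Measurable (κ n)) (hθm : ∀ n, Measurable (θ n)) (hκ : ∀ n ω, ‖κ n ω‖ ≤ 1)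
    (hθ : ∀ n, ∫⁻ ω, ‖θ n ω‖ₑ ∂P ≤ 1) :
    ∀ᵐ ω ∂P, Summable fun n => a n * κ n ω * θ n ω := by
  have hterm : ∀ n, eLpNorm (fun ω => a n * κ n ω * θ n ω) 1 P ≤ ‖a n‖ₑ := fun n =>
    calc eLpNorm (fun ω => a n * κ n ω * θ n ω) 1 P
        ≤ ∫⁻ ω, ‖a n‖ₑ * ‖θ n ω‖ₑ ∂P := by
          rw [eLpNorm_one_eq_lintegral_enorm]
          refine lintegral_mono fun ω => ?_
          calc ‖a n * κ n ω * θ n ω‖ₑ = ‖a n‖ₑ * ‖κ n ω‖ₑ * ‖θ n ω‖ₑ := by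
                rw [enorm_mul, enorm_mul]
            _ ≤ ‖a n‖ₑ * 1 * ‖θ n ω‖ₑ := by
                gcongr
                rw [← ofReal_norm]
                exact ENNReal.ofReal_le_one.2 (hκ n ω)
            _ = ‖a n‖ₑ * ‖θ n ω‖ₑ := by rw [mul_one]
      _ = ‖a n‖ₑ * ∫⁻ ω, ‖θ n ω‖ₑ ∂P := lintegral_const_mul _ (hθm n).enorm
      _ ≤ ‖a n‖ₑ := mul_le_of_le_one_right' (hθ n)
  have hfin : ∑' n, eLpNorm (fun ω => a n * κ n ω * θ n ω) 1 P ≠ ⊤ :=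
    ne_top_of_le_ne_top (tsum_enorm_ne_top_iff_summable_norm.2 ha.norm) (ENNReal.tsum_le_tsum hterm)
  filter_upwards [summable_norm_of_tsum_eLpNorm_ne_top le_rfl
    (fun n => ((measurable_const.mul (hκm n)).mul (hθm n)).aestronglyMeasurable) hfin]
    with ω hω using hω.of_norm

theorem measure_eq_one_of_eq_zero_or_one [IsProbabilityMeasure P] {X : Ω → ℝ}
    (hX : Measurable X) (h01 : ∀ ω, X ω = 0 ∨ X ω = 1) :
    P {ω | X ω = 1} = 1 - P {ω | X ω = 0} := by
  have h : {ω | X ω = 1} = {ω | X ω = 0}ᶜ := by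
    ext ω
    rcases h01 ω with h | h <;> simp [h]
  exact h ▸ prob_compl_eq_one_sub (hX (measurableSet_singleton 0))

theorem measure_firstEntrance_zero_one_inter_Ioi [IsProbabilityMeasure P] {α : ℝ} (hα0 : 0 ≤ α)
    {κ θ : ℕ → Ω → ℝ} (hindep : iIndepFun (Sum.elim κ θ) P) (hκm : ∀ n, Measurable (κ n))
    (hκ01 : ∀ n ω, κ n ω = 0 ∨ κ n ω = 1) (hκα : ∀ n, P {ω | κ n ω = 0} = ENNReal.ofReal α)
    (hθexp : ∀ n t, 0 ≤ t → P {ω | t < θ n ω} = ENNReal.ofReal (Real.exp (-t)))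
    {c : ℝ} (hc : 0 ≤ c) (n : ℕ) :
    P (firstEntrance κ {0} {1} n ∩ θ n ⁻¹' Set.Ioi c)
      = ENNReal.ofReal ((1 - α) * α ^ n * Real.exp (-c)) := by
  have hκ1 := measure_eq_one_of_eq_zero_or_one (P := P) (hκm n) (hκ01 n)
  rw [hindep.measure_firstEntrance_inter (measurableSet_singleton 0) (measurableSet_singleton 1)
    measurableSet_Ioi]
  simp only [Set.preimage, Set.mem_singleton_iff, Set.mem_Ioi, hκ1, hκα, hθexp n c hc,
    Finset.prod_const, Finset.card_range]
  rw [ENNReal.ofReal_mul' (Real.exp_pos _).le, ENNReal.ofReal_mul' (pow_nonneg hα0 n),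
    ENNReal.ofReal_pow hα0, ← ENNReal.ofReal_one, ← ENNReal.ofReal_sub _ hα0]
  ring

theorem ae_mul_le_tsum_of_eq_one [IsProbabilityMeasure P] {a : ℕ → ℝ} {κ θ : ℕ → Ω → ℝ}
    (ha : ∀ n, 0 ≤ a n) (hsum : Summable a) (hκm : ∀ n, Measurable (κ n))
    (hθm : ∀ n, Measurable (θ n)) (hκ01 : ∀ n ω, κ n ω = 0 ∨ κ n ω = 1)
    (hθexp : ∀ n t, 0 ≤ t → P {ω | t < θ n ω} = ENNReal.ofReal (Real.exp (-t))) :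
    ∀ᵐ ω ∂P, ∀ n, κ n ω = 1 → a n * θ n ω ≤ ∑' k, a k * κ k ω * θ k ω := by
  have hθpos : ∀ᵐ ω ∂P, ∀ n, 0 < θ n ω :=
    ae_all_iff.2 fun n => ae_pos_of_measure_lt_eq_exp (hθm n) (hθexp n)
  have hsumm := ae_summable_mul_mul hsum hκm hθm
    (fun n ω => by rcases hκ01 n ω with h | h <;> simp [h])
    fun n => (lintegral_enorm_eq_one_of_measure_lt_eq_exp (hθm n) (hθexp n)).le
  filter_upwards [hθpos, hsumm] with ω hθω hω n hκn
  have hnonneg : ∀ k, 0 ≤ a k * κ k ω * θ k ω := fun k =>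
    mul_nonneg (mul_nonneg (ha k) (by rcases hκ01 k ω with h | h <;> simp [h])) (hθω k).le
  simpa [hκn] using hω.le_tsum n fun k _ => hnonneg k

end RandomSeries

theorem hasSum_one_sub_mul_geometric {r : ℝ} (hr : |r| < 1) :
    HasSum (fun n => (1 - r) * r ^ n) 1 := by
  have h1r : 1 - r ≠ 0 := sub_ne_zero.2 (abs_lt.1 hr).2.ne'
  simpa [mul_inv_cancel₀ h1r] using (hasSum_geometric_of_abs_lt_one hr).mul_left (1 - r)

theorem exp_neg_mul_tsum_geometric_le {α : ℝ} (hα0 : 0 ≤ α) (hα1 : α < 1) {x : ℕ → ℝ}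
    (hx : Summable fun n => α ^ n * x n)
    (hex : Summable fun n => (1 - α) * α ^ n * Real.exp (-x n)) :
    Real.exp (-((1 - α) * ∑' n, α ^ n * x n)) ≤ ∑' n, (1 - α) * α ^ n * Real.exp (-x n) := by
  have hsum : ∑' n, (1 - α) * α ^ n * -x n = -((1 - α) * ∑' n, α ^ n * x n) := by
    rw [← tsum_mul_left, ← tsum_neg]
    exact tsum_congr fun n => by ring
  rw [← hsum]
  exact Real.exp_tsum_mul_le_tsum_mul_exp
    (fun n => mul_nonneg (sub_nonneg.2 hα1.le) (pow_nonneg hα0 n))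
    (hasSum_one_sub_mul_geometric (abs_lt.2 ⟨by linarith, hα1⟩))
    ((hx.mul_left (-(1 - α))).congr fun n => by ring) hex

theorem stmt15_general (Ω : Type) (_mΩ : MeasurableSpace Ω) (P : Measure Ω)
    [IsProbabilityMeasure P]
    (α : ℝ) (κ θ : ℕ → Ω → ℝ) (a : ℕ → ℝ)
    (hα0 : 0 ≤ α) (hα1 : α < 1)
    (hκm : ∀ n, Measurable (κ n)) (hθm : ∀ n, Measurable (θ n))
    (hindep : iIndepFun (Sum.elim κ θ) P)
    (hκ01 : ∀ n ω, κ n ω = 0 ∨ κ n ω = 1)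
    (hκα : ∀ n, P {ω | κ n ω = 0} = ENNReal.ofReal α)
    (hθexp : ∀ n t, 0 ≤ t → P {ω | t < θ n ω} = ENNReal.ofReal (Real.exp (-t)))
    (hapos : ∀ n, 0 < a n)
    (hsum : Summable a)
    (t : ℝ) (ht : 0 ≤ t) :
    ENNReal.ofReal (∑' n, (1 - α) * α ^ n * Real.exp (-t / a n))
      ≤ P {ω | t ≤ ∑' n, a n * κ n ω * θ n ω} ∧
    ((Summable fun n => α ^ n * (t / a n)) →
      Real.exp (-((1 - α) * ∑' n, α ^ n * (t / a n)))
        ≤ ∑' n, (1 - α) * α ^ n * Real.exp (-t / a n)) := by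
  have htn : ∀ n, 0 ≤ t / a n := fun n => div_nonneg ht (hapos n).le
  have hw0 : ∀ n, 0 ≤ (1 - α) * α ^ n := fun n =>
    mul_nonneg (sub_nonneg.2 hα1.le) (pow_nonneg hα0 n)
  have hR : Summable fun n => (1 - α) * α ^ n * Real.exp (-(t / a n)) :=
    (hasSum_one_sub_mul_geometric (abs_lt.2 ⟨by linarith, hα1⟩)).summable.of_nonneg_of_le
      (fun n => by positivity) fun n =>
        mul_le_of_le_one_right (hw0 n) (Real.exp_le_one_iff.2 (neg_nonpos.2 (htn n)))
  simp only [neg_div]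
  refine ⟨?_, fun hs => exp_neg_mul_tsum_geometric_le hα0 hα1 hs hR⟩
  let E n := firstEntrance κ {0} {1} n ∩ θ n ⁻¹' Set.Ioi (t / a n)
  have hsub : (⋃ n, E n) ≤ᵐ[P] {ω | t ≤ ∑' n, a n * κ n ω * θ n ω} := by
    filter_upwards [ae_mul_le_tsum_of_eq_one (fun n => (hapos n).le) hsum hκm hθm hκ01 hθexp]
      with ω hω
    rintro ⟨-, ⟨n, rfl⟩, ⟨-, hκn : κ n ω = 1⟩, hθn : t / a n < θ n ω⟩
    exact le_trans ((div_lt_iff₀' (hapos n)).1 hθn).le (hω n hκn)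
  calc ENNReal.ofReal (∑' n, (1 - α) * α ^ n * Real.exp (-(t / a n)))
      = ∑' n, P (E n) := by
        rw [ENNReal.ofReal_tsum_of_nonneg (fun n => by positivity) hR]
        exact tsum_congr fun n =>
          (measure_firstEntrance_zero_one_inter_Ioi hα0 hindep hκm hκ01 hκα hθexp (htn n) n).symm
    _ = P (⋃ n, E n) :=
        (measure_iUnion_firstEntrance_inter hκm hθm (measurableSet_singleton 0)
          (measurableSet_singleton 1) (by simp) fun _ => measurableSet_Ioi).symm
    _ ≤ _ := measure_mono_ae hsub

theorem stmt15 (Ω : Type) (_mΩ : MeasurableSpace Ω) (P : Measure Ω)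
    [IsProbabilityMeasure P]
    (α : ℝ) (κ θ : ℕ → Ω → ℝ) (a : ℕ → ℝ)
    (hα0 : 0 ≤ α) (hα1 : α < 1)
    (hκm : ∀ n, Measurable (κ n)) (hθm : ∀ n, Measurable (θ n))
    (hindep : iIndepFun (Sum.elim κ θ) P)
    (hκ01 : ∀ n ω, κ n ω = 0 ∨ κ n ω = 1)
    (hκα : ∀ n, P {ω | κ n ω = 0} = ENNReal.ofReal α)
    (hθexp : ∀ n t, 0 ≤ t → P {ω | t < θ n ω} = ENNReal.ofReal (Real.exp (-t)))
    (hapos : ∀ n, 0 < a n) (hmono : Antitone a)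
    (hsum : Summable a)
    (t : ℝ) (ht : 0 ≤ t) :
    ENNReal.ofReal (∑' n, (1 - α) * α ^ n * Real.exp (-t / a n))
      ≤ P {ω | t ≤ ∑' n, a n * κ n ω * θ n ω} ∧
    ((Summable fun n => α ^ n * (t / a n)) →
      Real.exp (-((1 - α) * ∑' n, α ^ n * (t / a n)))
        ≤ ∑' n, (1 - α) * α ^ n * Real.exp (-t / a n)) :=
  stmt15_general Ω _mΩ P α κ θ a hα0 hα1 hκm hθm hindep hκ01 hκα hθexp hapos hsum t ht
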